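/- arXiv:1310.5292 — 3 statements merged into one kernel-verified Lean document; each statement's English description precedes it below -/
import Mathlib

section
/- Let G be a connected graph on n ≥ 2 vertices with degrees d₁ ≥ d₂ ≥ ... ≥ d_n. Then for each 1 ≤ i ≤ n, the spectral radius of the adjacency matrix satisfies ρ(A(G)) ≤ (d_i − 1 + √((d_i + 1)² + 4·Σ_{k=1}^{i−1}(d_k − d_i)))/2. -/
open Matrix Finset Real

/-- Spectral radius: largest modulus of a complex eigenvalue (root of the
characteristic polynomial). -/
noncomputable def specRad {n : ℕ} (A : Matrix (Fin n) (Fin n) ℝ) : ℝ :=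
  (((A.map (Complex.ofReal)).charpoly.roots).map (fun z => ‖z‖)).foldr max 0

/-- Irreducibility of a nonnegative matrix. -/
def Irred {n : ℕ} (A : Matrix (Fin n) (Fin n) ℝ) : Prop :=
  ∀ i j : Fin n, ∃ k : ℕ, 0 < (A ^ k) i j

/-!
Choose a threshold `t = dᵢ` and let `e v = max (d v - t) 0` be the excess of the degree of `v`
over it, so that `∑ v, e v = ∑_{k<i} (d_k - d_i)` for a nonincreasing degree sequence. Let
`φ` be the positive root of `φ² = (t - 1) φ + t + ∑ v, e v`. The positive vector
`x v = 1 + e v / (φ + 1)` then satisfies `A x ≤ φ x` entrywise, since each row sums to at most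
`t + e v + (∑ w, e w - e v) / (φ + 1)`, which the quadratic equation turns into `φ x v`.
For a nonnegative matrix, such a vector bounds every complex eigenvalue by `φ`: compare an
eigenvector `y` with `x` at a coordinate maximizing `‖y w‖ / x w`.
-/

theorem Multiset.foldr_max_le {α : Type*} [LinearOrder α] {a b : α} (hb : b ≤ a) :
    ∀ {s : Multiset α}, (∀ x ∈ s, x ≤ a) → s.foldr max b ≤ a := by
  intro s
  induction s using Multiset.induction with
  | empty => exact fun _ => hb
  | cons x s ih =>
    intro h
    rw [Multiset.foldr_cons]
    exact max_le (h x (mem_cons_self x s)) (ih fun y hy => h y (mem_cons_of_mem hy))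

theorem Finset.sum_max_sub_zero_eq_sum_Iio {ι : Type*} [Fintype ι] [LinearOrder ι]
    [LocallyFiniteOrderBot ι] {f : ι → ℝ} (hf : Antitone f) (i : ι) :
    ∑ k, max (f k - f i) 0 = ∑ k ∈ Iio i, (f k - f i) := by
  rw [← sum_subset (subset_univ (Iio i))]
  · exact sum_congr rfl fun k hk => max_eq_left (sub_nonneg.2 (hf (mem_Iio.1 hk).le))
  · intro k _ hk
    exact max_eq_right (sub_nonpos.2 (hf (not_lt.1 (by simpa using hk))))

namespace Matrix

variable {ι : Type*} [Fintype ι] [DecidableEq ι]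

theorem exists_mulVec_eq_smul_of_isRoot_charpoly {K : Type*} [Field K] {M : Matrix ι ι K}
    {z : K} (hz : M.charpoly.IsRoot z) : ∃ y ≠ 0, M *ᵥ y = z • y := by
  rw [Polynomial.IsRoot.def, eval_charpoly, ← exists_mulVec_eq_zero_iff] at hz
  obtain ⟨y, hy0, hy⟩ := hz
  refine ⟨y, hy0, ?_⟩
  rw [sub_mulVec, sub_eq_zero] at hy
  simpa [scalar_apply, mulVec_diagonal, funext_iff, Pi.smul_apply] using hy.symm

theorem norm_le_of_isRoot_charpoly_of_mulVec_le {A : Matrix ι ι ℝ} (hA : ∀ i j, 0 ≤ A i j)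
    {x : ι → ℝ} (hx : ∀ i, 0 < x i) {r : ℝ} (hr : ∀ i, (A *ᵥ x) i ≤ r * x i) {z : ℂ}
    (hz : (A.map (↑)).charpoly.IsRoot z) : ‖z‖ ≤ r := by
  obtain ⟨y, hy0, hy⟩ := exists_mulVec_eq_smul_of_isRoot_charpoly hz
  obtain ⟨v, hv⟩ := Function.ne_iff.1 hy0
  obtain ⟨u, -, hu⟩ := exists_max_image univ (fun w => ‖y w‖ / x w) ⟨v, mem_univ v⟩
  set c := ‖y u‖ / x u
  have hc : 0 < c := (div_pos (norm_pos_iff.2 hv) (hx v)).trans_le (hu v (mem_univ v))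
  have hyx : ∀ w, ‖y w‖ ≤ c * x w := fun w => (div_le_iff₀ (hx w)).1 (hu w (mem_univ w))
  have hyu : ‖y u‖ = c * x u := (div_mul_cancel₀ _ (hx u).ne').symm
  have key : ‖z‖ * ‖y u‖ ≤ r * ‖y u‖ :=
    calc ‖z‖ * ‖y u‖ = ‖(A.map (↑) *ᵥ y) u‖ := by simp [hy]
      _ ≤ ∑ w, A u w * ‖y w‖ := by
        refine (norm_sum_le _ _).trans_eq (sum_congr rfl fun w _ => ?_)
        simp [Complex.norm_real, abs_of_nonneg (hA u w)]
      _ ≤ ∑ w, A u w * (c * x w) :=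
        sum_le_sum fun w _ => mul_le_mul_of_nonneg_left (hyx w) (hA u w)
      _ = c * (A *ᵥ x) u := by
        simp only [mulVec, dotProduct, mul_sum]
        exact sum_congr rfl fun w _ => by ring
      _ ≤ c * (r * x u) := mul_le_mul_of_nonneg_left (hr u) hc.le
      _ = r * ‖y u‖ := by rw [hyu]; ring
  exact le_of_mul_le_mul_right key (hyu ▸ mul_pos hc (hx u))

end Matrix

theorem specRad_le {n : ℕ} {A : Matrix (Fin n) (Fin n) ℝ} {r : ℝ} (hr : 0 ≤ r)
    (h : ∀ z : ℂ, (A.map (↑)).charpoly.IsRoot z → ‖z‖ ≤ r) : specRad A ≤ r :=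
  Multiset.foldr_max_le hr fun _ hx => by
    obtain ⟨z, hz, rfl⟩ := Multiset.mem_map.1 hx
    exact h z (Polynomial.mem_roots'.1 hz).2

namespace SimpleGraph

variable {V : Type*} [Fintype V] (G : SimpleGraph V) [DecidableRel G.Adj]

def degreeExcess (t : ℝ) (v : V) : ℝ := max ((G.degree v : ℝ) - t) 0

theorem degreeExcess_nonneg (t : ℝ) (v : V) : 0 ≤ G.degreeExcess t v := le_max_right _ _

theorem degree_le_add_degreeExcess (t : ℝ) (v : V) :
    (G.degree v : ℝ) ≤ t + G.degreeExcess t v := by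
  linarith [show (G.degree v : ℝ) - t ≤ G.degreeExcess t v from le_max_left _ _]

theorem adjMatrix_mulVec_excessWeight_le [DecidableEq V] {t φ : ℝ} (hφ : 0 < φ + 1)
    (hquad : φ ^ 2 = (t - 1) * φ + t + ∑ w, G.degreeExcess t w) (v : V) :
    (G.adjMatrix ℝ *ᵥ fun w => 1 + G.degreeExcess t w / (φ + 1)) v ≤
      φ * (1 + G.degreeExcess t v / (φ + 1)) := by
  set e := G.degreeExcess t
  have hnbr : ∑ w ∈ G.neighborFinset v, e w ≤ ∑ w, e w - e v := by
    rw [← sum_erase_eq_sub (mem_univ v)]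
    refine sum_le_sum_of_subset_of_nonneg (fun w hw => ?_) fun w _ _ =>
      G.degreeExcess_nonneg t w
    exact mem_erase.2 ⟨(G.mem_neighborFinset v w |>.1 hw).ne', mem_univ w⟩
  calc (G.adjMatrix ℝ *ᵥ fun w => 1 + e w / (φ + 1)) v
      = G.degree v + (∑ w ∈ G.neighborFinset v, e w) / (φ + 1) := by
        rw [adjMatrix_mulVec_apply, sum_add_distrib, sum_div, sum_const,
          card_neighborFinset_eq_degree, nsmul_one]
    _ ≤ t + e v + (∑ w, e w - e v) / (φ + 1) :=
        add_le_add (G.degree_le_add_degreeExcess t v) (div_le_div_of_nonneg_right hnbr hφ.le)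
    _ = φ * (1 + e v / (φ + 1)) := by
        field_simp
        linear_combination -hquad

theorem specRad_adjMatrix_le {n : ℕ} (G : SimpleGraph (Fin n)) [DecidableRel G.Adj] {t : ℝ}
    (ht : 0 ≤ t) :
    specRad (G.adjMatrix ℝ) ≤ (t - 1 + √((t + 1) ^ 2 + 4 * ∑ v, G.degreeExcess t v)) / 2 := by
  set S := ∑ v, G.degreeExcess t v
  have hS : 0 ≤ S := sum_nonneg fun v _ => G.degreeExcess_nonneg t v
  have hsq : √((t + 1) ^ 2 + 4 * S) ^ 2 = (t + 1) ^ 2 + 4 * S := sq_sqrt (by positivity)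
  have hsqrt : t + 1 ≤ √((t + 1) ^ 2 + 4 * S) := le_sqrt_of_sq_le (by linarith)
  set φ := (t - 1 + √((t + 1) ^ 2 + 4 * S)) / 2 with hφdef
  have hφ : t ≤ φ := by linarith
  have hquad : φ ^ 2 = (t - 1) * φ + t + S := by
    rw [hφdef]
    linear_combination hsq / 4
  refine specRad_le (ht.trans hφ) fun z hz =>
    norm_le_of_isRoot_charpoly_of_mulVec_le (fun v w => ?_) (fun w => ?_)
      (G.adjMatrix_mulVec_excessWeight_le (by linarith) hquad) hz
  · rw [adjMatrix_apply]
    split_ifs <;> norm_num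
  · have := div_nonneg (G.degreeExcess_nonneg t w) (show 0 ≤ φ + 1 by linarith)
    linarith

end SimpleGraph

theorem stmt_7_general {n : ℕ} (G : SimpleGraph (Fin n)) [DecidableRel G.Adj]
    (hord : ∀ i j : Fin n, i ≤ j → G.degree j ≤ G.degree i) :
    ∀ i : Fin n, specRad (G.adjMatrix ℝ) ≤
      ((G.degree i : ℝ) - 1 +
        Real.sqrt (((G.degree i : ℝ) + 1) ^ 2 +
          4 * ∑ k ∈ Finset.Iio i, ((G.degree k : ℝ) - (G.degree i : ℝ)))) / 2 := by
  intro i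
  have hanti : Antitone fun k => (G.degree k : ℝ) := fun a b h => Nat.cast_le.2 (hord a b h)
  have hbound := G.specRad_adjMatrix_le (Nat.cast_nonneg (G.degree i))
  simpa only [SimpleGraph.degreeExcess, sum_max_sub_zero_eq_sum_Iio hanti] using hbound

theorem stmt_7 {n : ℕ} (hn : 2 ≤ n) (G : SimpleGraph (Fin n)) [DecidableRel G.Adj]
    (hconn : G.Connected)
    (hord : ∀ i j : Fin n, i ≤ j → G.degree j ≤ G.degree i) :
    ∀ i : Fin n, specRad (G.adjMatrix ℝ) ≤
      ((G.degree i : ℝ) - 1 +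
        Real.sqrt (((G.degree i : ℝ) + 1) ^ 2 +
          4 * ∑ k ∈ Finset.Iio i, ((G.degree k : ℝ) - (G.degree i : ℝ)))) / 2 :=
  stmt_7_general G hord
end

section
/- Let G be a connected graph on n ≥ 2 vertices with average degrees m₁ ≥ m₂ ≥ ... ≥ m_n, where m_i = (Σ_{j∼i} d_j)/d_i, and let N = max_{i∼j} d_j/d_i. Then for each 1 ≤ i ≤ n, ρ(A(G)) ≤ (m_i − N + √((m_i + N)² + 4N·Σ_{k=1}^{i−1}(m_k − m_i)))/2, with equality if and only if m₁ = m₂ = ... = m_n (i.e., G is pseudo-regular). -/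
open Matrix Finset Real

/-!
Write `d` for the degrees, `ρ` for the spectral radius and `B` for the claimed bound, the
positive root of `(B + N) (B - m_i) = N S` with `S = ∑_{k<i} (m_k - m_i)`. Put `f_j = m_j - m_i`
for `j < i` and `f_j = 0` otherwise, and test `A` against the positive vector
`x_j = d_j (1 + f_j / (B + N))`: row `k` of `A x` is
`B x_k + d_k (m_k - m_i - f_k) - (N d_k (S - f_k) - ∑_{j∼k} d_j f_j) / (B + N)`.
Both corrections are `≤ 0`, the second because neighbours of `k` have degree at most `N d_k`;
so `A x ≤ B x` and `ρ ≤ B` (Collatz–Wielandt).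

If `ρ = B`, irreducibility forces `A x = B x`, so both corrections vanish: `m_k = m_i + f_k` for
all `k`, and a vertex `j` with `f_j > 0` has `d_j = N d_k` for every `k ≠ j`. At a vertex `j` of
maximal `m`, either `f_j = 0`, and then `m_j = m_i ≤ m_k`, or all other vertices have degree
`d_j / N ≤ d_j`, and then `m_j = d_j / N ≤ m_k`. Either way `m` is constant. Conversely, if `m`
is constant then `S = 0`, `B = m_i`, and `d` is a positive eigenvector for `m_i`.
-/

theorem Multiset.foldr_max_le_iff {α : Type*} [LinearOrder α] {s : Multiset α} {b c : α} :
    s.foldr max b ≤ c ↔ b ≤ c ∧ ∀ x ∈ s, x ≤ c := by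
  induction s using Multiset.induction with
  | empty => simp
  | cons a s ih => simp [ih, and_left_comm]

theorem Multiset.foldr_max_mem {α : Type*} [LinearOrder α] (s : Multiset α) (b : α) :
    s.foldr max b ∈ b ::ₘ s := by
  induction s using Multiset.induction with
  | empty => simp
  | cons a s ih =>
    rw [Multiset.foldr_cons, Multiset.cons_swap]
    rcases max_choice a (s.foldr max b) with h | h <;> rw [h]
    · exact Multiset.mem_cons_self _ _
    · exact Multiset.mem_cons_of_mem ih

theorem Matrix.mem_roots_charpoly_iff {ι K : Type*} [Fintype ι] [DecidableEq ι] [Field K]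
    (M : Matrix ι ι K) (z : K) : z ∈ M.charpoly.roots ↔ ∃ v ≠ 0, M *ᵥ v = z • v := by
  rw [Polynomial.mem_roots M.charpoly_monic.ne_zero, ← Matrix.charpoly_toLin',
    ← Module.End.hasEigenvalue_iff_isRoot_charpoly]
  constructor
  · intro h
    obtain ⟨v, hv⟩ := h.exists_hasEigenvector
    exact ⟨v, hv.2, by simpa using hv.apply_eq_smul⟩
  · rintro ⟨v, hv, h⟩
    exact Module.End.hasEigenvalue_of_hasEigenvector
      ⟨Module.End.mem_eigenspace_iff.2 (by simpa using h), hv⟩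

theorem exists_norm_le_mul_eq {ι : Type*} [Fintype ι] {v : ι → ℂ} (hv : v ≠ 0) {u : ι → ℝ}
    (hu : ∀ k, 0 < u k) : ∃ W > 0, (∀ k, ‖v k‖ ≤ W * u k) ∧ ∃ k, ‖v k‖ = W * u k := by
  obtain ⟨kx, hkx⟩ := Function.ne_iff.1 hv
  have : Nonempty ι := ⟨kx⟩
  obtain ⟨k, hk⟩ := Finite.exists_max fun k => ‖v k‖ / u k
  refine ⟨‖v k‖ / u k, (div_pos (norm_pos_iff.2 hkx) (hu kx)).trans_le (hk kx),
    fun j => (div_le_iff₀ (hu j)).1 (hk j), k, (div_mul_cancel₀ _ (hu k).ne').symm⟩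

section specRad

variable {n : ℕ} {A : Matrix (Fin n) (Fin n) ℝ}

theorem specRad_le_s9 {B : ℝ} (hB : 0 ≤ B)
    (h : ∀ z ∈ (A.map Complex.ofReal).charpoly.roots, ‖z‖ ≤ B) : specRad A ≤ B :=
  Multiset.foldr_max_le_iff.2 ⟨hB, by
    simp only [Multiset.mem_map]
    rintro _ ⟨z, hz, rfl⟩
    exact h z hz⟩

theorem norm_le_specRad {z : ℂ} (hz : z ∈ (A.map Complex.ofReal).charpoly.roots) :
    ‖z‖ ≤ specRad A :=
  (Multiset.foldr_max_le_iff.1 le_rfl).2 _ (Multiset.mem_map_of_mem _ hz)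

theorem exists_norm_eq_specRad (h : specRad A ≠ 0) :
    ∃ z ∈ (A.map Complex.ofReal).charpoly.roots, ‖z‖ = specRad A := by
  rcases Multiset.mem_cons.1 (Multiset.foldr_max_mem
    ((A.map Complex.ofReal).charpoly.roots.map (‖·‖)) 0) with h0 | hmem
  · exact absurd h0 h
  · exact Multiset.mem_map.1 hmem

theorem norm_mul_le_sum_of_mulVec_eq (hA : ∀ i j, 0 ≤ A i j) {v : Fin n → ℂ} {z : ℂ}
    (hv : A.map Complex.ofReal *ᵥ v = z • v) (k : Fin n) :
    ‖z‖ * ‖v k‖ ≤ ∑ j, A k j * ‖v j‖ :=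
  calc ‖z‖ * ‖v k‖ = ‖∑ j, (A k j : ℂ) * v j‖ := by
        rw [← norm_mul, ← smul_eq_mul, ← Pi.smul_apply, ← hv]; rfl
    _ ≤ ∑ j, A k j * ‖v j‖ :=
        (norm_sum_le _ _).trans_eq (by simp [Complex.norm_real, abs_of_nonneg (hA _ _)])

theorem Irred.forall_of_closed (hA : ∀ i j, 0 ≤ A i j) (hirr : Irred A) {T : Fin n → Prop}
    (hT : ∀ k j, T k → 0 < A k j → T j) {i : Fin n} (hi : T i) (j : Fin n) : T j := by
  obtain ⟨p, hp⟩ := hirr i j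
  induction p generalizing j with
  | zero =>
    rw [pow_zero, one_apply] at hp
    split_ifs at hp with h
    · exact h ▸ hi
    · exact absurd hp (lt_irrefl 0)
  | succ p ih =>
    rw [pow_succ, mul_apply] at hp
    obtain ⟨l, -, hl⟩ := Finset.exists_lt_of_sum_lt (s := Finset.univ) (f := fun _ => (0 : ℝ))
      (by simpa using hp)
    have hAl : 0 < A l j := (hA l j).lt_of_ne fun h => by simp [← h] at hl
    exact hT l j (ih l (pos_of_mul_pos_left hl hAl.le)) hAl

theorem le_specRad_of_mulVec_eq {x : Fin n → ℝ} (hx : x ≠ 0) {μ : ℝ} (hμ : 0 ≤ μ)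
    (hAx : A *ᵥ x = μ • x) : μ ≤ specRad A := by
  have hroot : (μ : ℂ) ∈ (A.map Complex.ofReal).charpoly.roots := by
    refine (Matrix.mem_roots_charpoly_iff _ _).2 ⟨Complex.ofReal ∘ x, ?_, ?_⟩
    · exact fun h => hx (funext fun k => by simpa using congrFun h k)
    · ext k
      exact (RingHom.map_mulVec Complex.ofRealHom A x k).symm.trans (by simp [hAx])
  simpa [abs_of_nonneg hμ] using norm_le_specRad hroot

theorem specRad_le_of_mulVec_le (hA : ∀ i j, 0 ≤ A i j) {u : Fin n → ℝ} (hu : ∀ k, 0 < u k)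
    {B : ℝ} (hB : 0 ≤ B) (hAu : A *ᵥ u ≤ B • u) : specRad A ≤ B := by
  refine specRad_le_s9 hB fun z hz => ?_
  obtain ⟨v, hv0, hv⟩ := (Matrix.mem_roots_charpoly_iff _ z).1 hz
  obtain ⟨W, hW, hle, k, hk⟩ := exists_norm_le_mul_eq hv0 hu
  have : ‖z‖ * (W * u k) ≤ B * (W * u k) := calc
    ‖z‖ * (W * u k) = ‖z‖ * ‖v k‖ := by rw [hk]
    _ ≤ ∑ j, A k j * ‖v j‖ := norm_mul_le_sum_of_mulVec_eq hA hv k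
    _ ≤ ∑ j, A k j * (W * u j) :=
        sum_le_sum fun j _ => mul_le_mul_of_nonneg_left (hle j) (hA k j)
    _ = W * (A *ᵥ u) k := by rw [← smul_eq_mul, ← Pi.smul_apply, ← mulVec_smul]; rfl
    _ ≤ W * (B * u k) := mul_le_mul_of_nonneg_left (hAu k) hW.le
    _ = B * (W * u k) := by ring
  exact le_of_mul_le_mul_right this (mul_pos hW (hu k))

theorem mulVec_eq_of_specRad_eq (hA : ∀ i j, 0 ≤ A i j) (hirr : Irred A) {u : Fin n → ℝ}
    (hu : ∀ k, 0 < u k) {B : ℝ} (hB : 0 < B) (hAu : A *ᵥ u ≤ B • u) (hρ : specRad A = B) :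
    A *ᵥ u = B • u := by
  obtain ⟨z, hz, hzB⟩ := exists_norm_eq_specRad (hρ ▸ hB.ne')
  rw [hρ] at hzB
  obtain ⟨v, hv0, hv⟩ := (Matrix.mem_roots_charpoly_iff _ z).1 hz
  obtain ⟨W, hW, hle, k₀, hk₀⟩ := exists_norm_le_mul_eq hv0 hu
  have hsum_le : ∀ k, ∑ j, A k j * ‖v j‖ ≤ ∑ j, A k j * (W * u j) := fun k =>
    sum_le_sum fun j _ => mul_le_mul_of_nonneg_left (hle j) (hA k j)
  have hsum_eq : ∀ k, ∑ j, A k j * (W * u j) = W * (A *ᵥ u) k := fun k => by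
    rw [← smul_eq_mul, ← Pi.smul_apply, ← mulVec_smul]; rfl
  -- where `‖v‖ = W u`, the chain `B W u ≤ ∑ A ‖v‖ ≤ W (A u) ≤ B W u` is tight
  have tight : ∀ k, ‖v k‖ = W * u k →
      ∑ j, A k j * ‖v j‖ = ∑ j, A k j * (W * u j) ∧ (A *ᵥ u) k = B * u k := by
    intro k hk
    have h₁ := norm_mul_le_sum_of_mulVec_eq hA hv k
    rw [hzB, hk] at h₁
    have h₂ : W * (A *ᵥ u) k ≤ W * (B * u k) := mul_le_mul_of_nonneg_left (hAu k) hW.le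
    have h₃ := hsum_le k
    rw [hsum_eq] at h₃ ⊢
    exact ⟨by nlinarith, by nlinarith⟩
  have hT : ∀ k, ‖v k‖ = W * u k := by
    refine hirr.forall_of_closed hA (fun k j hk hkj => ?_) hk₀
    have := (sum_eq_sum_iff_of_le fun j _ => mul_le_mul_of_nonneg_left (hle j) (hA k j)).1
      (tight k hk).1 j (mem_univ j)
    exact mul_left_cancel₀ hkj.ne' this
  exact funext fun k => (tight k (hT k)).2

end specRad

theorem Finset.mem_and_eq_of_sum_eq_sum_of_subset {ι : Type*} [DecidableEq ι] {s t : Finset ι}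
    {g h : ι → ℝ} (hst : s ⊆ t) (hgh : ∀ x ∈ s, g x ≤ h x) (hh : ∀ x ∈ t, 0 ≤ h x)
    (heq : ∑ x ∈ s, g x = ∑ x ∈ t, h x) {j : ι} (hj : j ∈ t) (hj0 : h j ≠ 0) :
    j ∈ s ∧ g j = h j := by
  have hle : ∑ x ∈ s, g x ≤ ∑ x ∈ s, h x := sum_le_sum hgh
  have hsplit := sum_sdiff hst (f := h)
  have hrest : 0 ≤ ∑ x ∈ t \ s, h x := sum_nonneg fun x hx => hh x (sdiff_subset hx)
  have hjs : j ∈ s := by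
    by_contra hjs
    have hzero : ∑ x ∈ t \ s, h x = 0 := by linarith
    exact hj0 ((sum_eq_zero_iff_of_nonneg fun x hx => hh x (sdiff_subset hx)).1 hzero j
      (mem_sdiff.2 ⟨hj, hjs⟩))
  exact ⟨hjs, (sum_eq_sum_iff_of_le hgh).1 (by linarith) j hjs⟩

theorem quadratic_root_spec {μ N S : ℝ} (hN : 0 ≤ N) (hS : 0 ≤ S) :
    ((μ - N + √((μ + N) ^ 2 + 4 * N * S)) / 2 + N) *
        ((μ - N + √((μ + N) ^ 2 + 4 * N * S)) / 2 - μ) = N * S ∧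
      μ ≤ (μ - N + √((μ + N) ^ 2 + 4 * N * S)) / 2 := by
  have hdisc : (μ + N) ^ 2 ≤ (μ + N) ^ 2 + 4 * N * S := by nlinarith
  have hsq := Real.sq_sqrt ((sq_nonneg (μ + N)).trans hdisc)
  have hge : μ + N ≤ √((μ + N) ^ 2 + 4 * N * S) :=
    Real.le_sqrt_of_sq_le hdisc
  exact ⟨by linear_combination hsq / 4, by linarith⟩

section PrefixExcess

variable {ι : Type*} [LinearOrder ι] {m : ι → ℝ}

def prefixExcess (m : ι → ℝ) (i j : ι) : ℝ :=
  if j < i then m j - m i else 0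

theorem prefixExcess_nonneg (hm : Antitone m) (i j : ι) : 0 ≤ prefixExcess m i j := by
  by_cases h : j < i
  · simpa [prefixExcess, h] using hm h.le
  · simp [prefixExcess, h]

theorem sub_le_prefixExcess (hm : Antitone m) (i j : ι) : m j - m i ≤ prefixExcess m i j := by
  by_cases h : j < i
  · simp [prefixExcess, h]
  · simpa [prefixExcess, h] using hm (not_lt.1 h)

theorem sum_prefixExcess [Fintype ι] [LocallyFiniteOrderBot ι] (i : ι) :
    ∑ j, prefixExcess m i j = ∑ k ∈ Iio i, (m k - m i) := by
  rw [← filter_gt_eq_Iio, sum_filter]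
  rfl

end PrefixExcess

namespace SimpleGraph

theorem adjMatrix_apply_nonneg {V : Type*} (G : SimpleGraph V) [DecidableRel G.Adj] (i j : V) :
    0 ≤ G.adjMatrix ℝ i j := by
  rw [adjMatrix_apply]
  split_ifs <;> norm_num

section Finite

variable {V : Type*} [Fintype V] (G : SimpleGraph V) [DecidableRel G.Adj]

noncomputable def averageNeighborDegree (k : V) : ℝ :=
  (∑ j ∈ G.neighborFinset k, (G.degree j : ℝ)) / G.degree k

variable {G}

theorem averageNeighborDegree_mul_degree {k : V} (hk : 0 < G.degree k) :
    G.averageNeighborDegree k * G.degree k = ∑ j ∈ G.neighborFinset k, (G.degree j : ℝ) :=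
  div_mul_cancel₀ _ (by positivity)

theorem le_averageNeighborDegree {k : V} (hk : 0 < G.degree k) {D : ℝ}
    (h : ∀ j ∈ G.neighborFinset k, D ≤ G.degree j) : D ≤ G.averageNeighborDegree k := by
  rw [averageNeighborDegree, le_div_iff₀ (by positivity)]
  simpa [card_neighborFinset_eq_degree, mul_comm] using sum_le_sum h

theorem averageNeighborDegree_le {k : V} (hk : 0 < G.degree k) {D : ℝ}
    (h : ∀ j ∈ G.neighborFinset k, (G.degree j : ℝ) ≤ D) : G.averageNeighborDegree k ≤ D := by
  rw [averageNeighborDegree, div_le_iff₀ (by positivity)]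
  simpa [card_neighborFinset_eq_degree, mul_comm] using sum_le_sum h

theorem averageNeighborDegree_pos (hdeg : ∀ j, 0 < G.degree j) (k : V) :
    0 < G.averageNeighborDegree k :=
  zero_lt_one.trans_le <| le_averageNeighborDegree (hdeg k) fun j _ => by exact_mod_cast hdeg j

theorem one_le_of_degree_le_mul (hdeg : ∀ k, 0 < G.degree k) {N : ℝ}
    (hratio : ∀ k j, G.Adj k j → (G.degree j : ℝ) ≤ N * G.degree k) {a b : V} (hab : G.Adj a b) :
    1 ≤ N := by
  have ha : (0 : ℝ) < G.degree a := by exact_mod_cast hdeg a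
  have hb : (0 : ℝ) < G.degree b := by exact_mod_cast hdeg b
  have h₁ := hratio a b hab
  have h₂ := hratio b a hab.symm
  by_contra! hN
  nlinarith

theorem neighborFinset_subset_erase_univ [DecidableEq V] (k : V) :
    G.neighborFinset k ⊆ univ.erase k :=
  fun _ hj => mem_erase.2 ⟨((mem_neighborFinset _ _ _).1 hj).ne', mem_univ _⟩

section TestVector

variable {N : ℝ} {f : V → ℝ}

variable (G) in
noncomputable def testVector (B N : ℝ) (f : V → ℝ) (j : V) : ℝ :=
  G.degree j * (1 + f j / (B + N))

theorem testVector_pos (hdeg : ∀ k, 0 < G.degree k) {B : ℝ} (hBN : 0 < B + N) (hf : ∀ k, 0 ≤ f k)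
    (k : V) : 0 < G.testVector B N f k :=
  mul_pos (Nat.cast_pos.2 (hdeg k)) (by linarith [div_nonneg (hf k) hBN.le])

variable [DecidableEq V]

theorem adjMatrix_mulVec_testVector {μ B : ℝ} (hBN : B + N ≠ 0)
    (hB : (B + N) * (B - μ) = N * ∑ j, f j) {k : V} (hk : 0 < G.degree k) :
    (G.adjMatrix ℝ *ᵥ G.testVector B N f) k =
      B * G.testVector B N f k + G.degree k * (G.averageNeighborDegree k - μ - f k) -
        (N * G.degree k * ∑ j ∈ univ.erase k, f j -
          ∑ j ∈ G.neighborFinset k, G.degree j * f j) / (B + N) := by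
  have hsplit : ∑ j ∈ G.neighborFinset k, (G.degree j : ℝ) * (1 + f j / (B + N)) =
      ∑ j ∈ G.neighborFinset k, (G.degree j : ℝ) +
        (∑ j ∈ G.neighborFinset k, G.degree j * f j) / (B + N) := by
    rw [sum_div, ← sum_add_distrib]
    exact sum_congr rfl fun j _ => by ring
  simp only [adjMatrix_mulVec_apply, testVector]
  rw [hsplit,
    ← averageNeighborDegree_mul_degree hk, sum_erase_eq_sub (mem_univ k)]
  field_simp
  linear_combination (-(G.degree k : ℝ)) * hB

theorem sum_degree_mul_le (hN : 0 ≤ N)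
    (hratio : ∀ k j, G.Adj k j → (G.degree j : ℝ) ≤ N * G.degree k) (hf : ∀ k, 0 ≤ f k) (k : V) :
    ∑ j ∈ G.neighborFinset k, G.degree j * f j ≤ N * G.degree k * ∑ j ∈ univ.erase k, f j :=
  calc ∑ j ∈ G.neighborFinset k, G.degree j * f j
      ≤ ∑ j ∈ G.neighborFinset k, N * G.degree k * f j :=
        sum_le_sum fun j hj => mul_le_mul_of_nonneg_right
          (hratio k j ((mem_neighborFinset _ _ _).1 hj)) (hf j)
    _ ≤ ∑ j ∈ univ.erase k, N * G.degree k * f j :=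
        sum_le_sum_of_subset_of_nonneg (neighborFinset_subset_erase_univ k)
          fun j _ _ => mul_nonneg (mul_nonneg hN (Nat.cast_nonneg _)) (hf j)
    _ = N * G.degree k * ∑ j ∈ univ.erase k, f j := by rw [mul_sum]

theorem degree_eq_of_sum_degree_mul_eq (hN : 0 < N)
    (hratio : ∀ k j, G.Adj k j → (G.degree j : ℝ) ≤ N * G.degree k) (hf : ∀ k, 0 ≤ f k) {k : V}
    (hk : 0 < G.degree k)
    (heq : ∑ j ∈ G.neighborFinset k, G.degree j * f j = N * G.degree k * ∑ j ∈ univ.erase k, f j)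
    {j : V} (hjk : j ≠ k) (hfj : 0 < f j) : (G.degree j : ℝ) = N * G.degree k := by
  rw [mul_sum] at heq
  have hk' : (0 : ℝ) < G.degree k := by exact_mod_cast hk
  obtain ⟨-, hj⟩ := mem_and_eq_of_sum_eq_sum_of_subset (neighborFinset_subset_erase_univ k)
    (fun x hx => mul_le_mul_of_nonneg_right (hratio k x ((mem_neighborFinset _ _ _).1 hx)) (hf x))
    (fun x _ => mul_nonneg (mul_nonneg hN.le hk'.le) (hf x)) heq (mem_erase.2 ⟨hjk, mem_univ j⟩)
    (mul_pos (mul_pos hN hk') hfj).ne'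
  exact mul_right_cancel₀ hfj.ne' hj

theorem testVector_defects_nonneg (hN : 0 ≤ N)
    (hratio : ∀ k j, G.Adj k j → (G.degree j : ℝ) ≤ N * G.degree k) (hf : ∀ k, 0 ≤ f k) {μ B : ℝ}
    (hfμ : ∀ k, G.averageNeighborDegree k - μ ≤ f k) (hBN : 0 < B + N) (k : V) :
    (G.degree k : ℝ) * (G.averageNeighborDegree k - μ - f k) ≤ 0 ∧
      0 ≤ (N * G.degree k * ∑ j ∈ univ.erase k, f j -
        ∑ j ∈ G.neighborFinset k, G.degree j * f j) / (B + N) :=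
  ⟨mul_nonpos_of_nonneg_of_nonpos (Nat.cast_nonneg _) (by linarith [hfμ k]),
    div_nonneg (by linarith [sum_degree_mul_le hN hratio hf k]) hBN.le⟩

theorem adjMatrix_mulVec_testVector_le (hdeg : ∀ k, 0 < G.degree k) (hN : 0 ≤ N)
    (hratio : ∀ k j, G.Adj k j → (G.degree j : ℝ) ≤ N * G.degree k) (hf : ∀ k, 0 ≤ f k) {μ B : ℝ}
    (hfμ : ∀ k, G.averageNeighborDegree k - μ ≤ f k) (hBN : 0 < B + N)
    (hB : (B + N) * (B - μ) = N * ∑ j, f j) :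
    G.adjMatrix ℝ *ᵥ G.testVector B N f ≤ B • G.testVector B N f := fun k => by
  have := testVector_defects_nonneg hN hratio hf hfμ hBN k
  rw [Pi.smul_apply, smul_eq_mul, adjMatrix_mulVec_testVector hBN.ne' hB (hdeg k)]
  linarith

theorem eq_of_adjMatrix_mulVec_testVector_eq (hdeg : ∀ k, 0 < G.degree k) (hN : 0 ≤ N)
    (hratio : ∀ k j, G.Adj k j → (G.degree j : ℝ) ≤ N * G.degree k) (hf : ∀ k, 0 ≤ f k) {μ B : ℝ}
    (hfμ : ∀ k, G.averageNeighborDegree k - μ ≤ f k) (hBN : 0 < B + N)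
    (hB : (B + N) * (B - μ) = N * ∑ j, f j)
    (heq : G.adjMatrix ℝ *ᵥ G.testVector B N f = B • G.testVector B N f) (k : V) :
    G.averageNeighborDegree k - μ = f k ∧
      ∑ j ∈ G.neighborFinset k, G.degree j * f j = N * G.degree k * ∑ j ∈ univ.erase k, f j := by
  obtain ⟨hdefect, hslack⟩ := testVector_defects_nonneg hN hratio hf hfμ hBN k
  have hrow := congrFun heq k
  rw [Pi.smul_apply, smul_eq_mul, adjMatrix_mulVec_testVector hBN.ne' hB (hdeg k)] at hrow
  have h₁ : (G.degree k : ℝ) * (G.averageNeighborDegree k - μ - f k) = 0 := by linarith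
  have h₂ : (N * G.degree k * ∑ j ∈ univ.erase k, f j -
      ∑ j ∈ G.neighborFinset k, G.degree j * f j) / (B + N) = 0 := by linarith
  rw [mul_eq_zero, Nat.cast_eq_zero] at h₁
  rw [div_eq_zero_iff, sub_eq_zero] at h₂
  exact ⟨by linarith [h₁.resolve_left (hdeg k).ne'], (h₂.resolve_right hBN.ne').symm⟩

end TestVector

theorem averageNeighborDegree_le_of_degree_eq (hdeg : ∀ k, 0 < G.degree k) {N : ℝ} (hN : 1 ≤ N)
    {j : V} (hj : ∀ k ≠ j, (G.degree j : ℝ) = N * G.degree k) (k : V) :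
    G.averageNeighborDegree j ≤ G.averageNeighborDegree k := by
  have hD : ∀ x ≠ j, (G.degree x : ℝ) = G.degree j / N := fun x hx => by
    rw [hj x hx, mul_div_cancel_left₀ _ (by positivity)]
  refine (averageNeighborDegree_le (hdeg j) fun x hx => (hD x ?_).le).trans
    (le_averageNeighborDegree (hdeg k) fun x _ => ?_)
  · exact ((mem_neighborFinset _ _ _).1 hx).ne'
  · rcases eq_or_ne x j with rfl | hx
    · exact div_le_self (Nat.cast_nonneg _) hN
    · exact (hD x hx).ge

end Finite

section Fin

variable {n : ℕ} {G : SimpleGraph (Fin n)} [DecidableRel G.Adj] {N μ B : ℝ} {f : Fin n → ℝ}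

theorem Connected.irred_adjMatrix (hG : G.Connected) : Irred (G.adjMatrix ℝ) := fun i j => by
  obtain ⟨w⟩ := hG.preconnected i j
  refine ⟨w.length, ?_⟩
  rw [adjMatrix_pow_apply_eq_card_walk]
  exact Nat.cast_pos.2 (Fintype.card_pos_iff.2 ⟨⟨w, rfl⟩⟩)

theorem specRad_adjMatrix_le_s9 (hdeg : ∀ k, 0 < G.degree k) (hN : 0 ≤ N)
    (hratio : ∀ k j, G.Adj k j → (G.degree j : ℝ) ≤ N * G.degree k) (hf : ∀ k, 0 ≤ f k)
    (hfμ : ∀ k, G.averageNeighborDegree k - μ ≤ f k) (hBpos : 0 < B)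
    (hB : (B + N) * (B - μ) = N * ∑ j, f j) : specRad (G.adjMatrix ℝ) ≤ B :=
  specRad_le_of_mulVec_le G.adjMatrix_apply_nonneg (testVector_pos hdeg (by linarith) hf)
    hBpos.le (adjMatrix_mulVec_testVector_le hdeg hN hratio hf hfμ (by linarith) hB)

theorem averageNeighborDegree_eq_of_specRad_adjMatrix_eq (hG : G.Connected)
    (hdeg : ∀ k, 0 < G.degree k) (hN : 1 ≤ N)
    (hratio : ∀ k j, G.Adj k j → (G.degree j : ℝ) ≤ N * G.degree k) (hf : ∀ k, 0 ≤ f k)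
    (hfμ : ∀ k, G.averageNeighborDegree k - μ ≤ f k) (hBpos : 0 < B)
    (hB : (B + N) * (B - μ) = N * ∑ j, f j) (hρ : specRad (G.adjMatrix ℝ) = B) (a b : Fin n) :
    G.averageNeighborDegree a = G.averageNeighborDegree b := by
  have hBN : 0 < B + N := by linarith
  have hrow := eq_of_adjMatrix_mulVec_testVector_eq hdeg (by linarith) hratio hf hfμ hBN hB <|
    mulVec_eq_of_specRad_eq G.adjMatrix_apply_nonneg hG.irred_adjMatrix
      (testVector_pos hdeg hBN hf) hBpos
      (adjMatrix_mulVec_testVector_le hdeg (by linarith) hratio hf hfμ hBN hB) hρ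
  have : Nonempty (Fin n) := ⟨a⟩
  obtain ⟨j, hj⟩ := Finite.exists_max G.averageNeighborDegree
  have hmin : ∀ k, G.averageNeighborDegree j ≤ G.averageNeighborDegree k := by
    rcases (hf j).eq_or_lt with hfj | hfj
    · exact fun k => by linarith [(hrow j).1, (hrow k).1, hf k]
    · exact averageNeighborDegree_le_of_degree_eq hdeg hN fun k hk =>
        degree_eq_of_sum_degree_mul_eq (by linarith) hratio hf (hdeg k) (hrow k).2 hk.symm hfj
  linarith [hj a, hj b, hmin a, hmin b]

theorem specRad_adjMatrix_eq_of_averageNeighborDegree_eq (hdeg : ∀ k, 0 < G.degree k)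
    (i : Fin n) (hi : ∀ k, G.averageNeighborDegree k = G.averageNeighborDegree i) :
    specRad (G.adjMatrix ℝ) = G.averageNeighborDegree i := by
  have hd : G.adjMatrix ℝ *ᵥ (fun k => (G.degree k : ℝ)) =
      G.averageNeighborDegree i • fun k => (G.degree k : ℝ) := funext fun k => by
    rw [adjMatrix_mulVec_apply, Pi.smul_apply, smul_eq_mul, ← hi k,
      averageNeighborDegree_mul_degree (hdeg k)]
  have hi0 := (averageNeighborDegree_pos hdeg i).le
  refine le_antisymm (specRad_le_of_mulVec_le G.adjMatrix_apply_nonneg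
    (fun k => Nat.cast_pos.2 (hdeg k)) hi0 hd.le) (le_specRad_of_mulVec_eq ?_ hi0 hd)
  exact Function.ne_iff.2 ⟨i, Nat.cast_ne_zero.2 (hdeg i).ne'⟩

end Fin

end SimpleGraph

open SimpleGraph in
theorem stmt_9_general {n : ℕ} (G : SimpleGraph (Fin n)) [DecidableRel G.Adj]
    (hconn : G.Connected)
    (m : Fin n → ℝ)
    (hm : ∀ i, m i = (∑ j ∈ G.neighborFinset i, (G.degree j : ℝ)) / (G.degree i : ℝ))
    (hord : ∀ i j : Fin n, i ≤ j → m j ≤ m i)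
    (N : ℝ) (hN : IsGreatest {x | ∃ i j, G.Adj i j ∧ x = (G.degree j : ℝ) / (G.degree i : ℝ)} N) :
    ∀ i : Fin n,
      specRad (G.adjMatrix ℝ) ≤
        (m i - N +
          Real.sqrt ((m i + N) ^ 2 + 4 * N * ∑ k ∈ Finset.Iio i, (m k - m i))) / 2 ∧
      (specRad (G.adjMatrix ℝ) =
        (m i - N +
          Real.sqrt ((m i + N) ^ 2 + 4 * N * ∑ k ∈ Finset.Iio i, (m k - m i))) / 2 ↔
        ∀ j k : Fin n, m j = m k) := by
  intro i
  obtain rfl : m = G.averageNeighborDegree := funext hm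
  obtain ⟨a, b, hab, -⟩ := hN.1
  have : Nontrivial (Fin n) := ⟨⟨a, b, hab.ne⟩⟩
  have hdeg : ∀ k, 0 < G.degree k := fun k => hconn.preconnected.degree_pos_of_nontrivial k
  have hratio : ∀ k j, G.Adj k j → (G.degree j : ℝ) ≤ N * G.degree k := fun k j h =>
    (div_le_iff₀ (Nat.cast_pos.2 (hdeg k))).1 (hN.2 ⟨k, j, h, rfl⟩)
  have hN1 : 1 ≤ N := one_le_of_degree_le_mul hdeg hratio hab
  have hf := prefixExcess_nonneg hord i
  have hfμ := sub_le_prefixExcess hord i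
  have hμ := averageNeighborDegree_pos hdeg i
  rw [← sum_prefixExcess]
  obtain ⟨hB, hμB⟩ := quadratic_root_spec (μ := G.averageNeighborDegree i) (N := N) (by linarith)
    (sum_nonneg fun k (_ : k ∈ univ) => hf k)
  have hBpos := hμ.trans_le hμB
  refine ⟨specRad_adjMatrix_le_s9 hdeg (by linarith) hratio hf hfμ hBpos hB,
    averageNeighborDegree_eq_of_specRad_adjMatrix_eq hconn hdeg hN1 hratio hf hfμ hBpos hB,
    fun h => ?_⟩
  rw [specRad_adjMatrix_eq_of_averageNeighborDegree_eq hdeg i fun k => h k i, sum_prefixExcess,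
    sum_eq_zero fun k _ => sub_eq_zero.2 (h k i), mul_zero, add_zero,
    Real.sqrt_sq (by linarith)]
  ring

theorem stmt_9 {n : ℕ} (hn : 2 ≤ n) (G : SimpleGraph (Fin n)) [DecidableRel G.Adj]
    (hconn : G.Connected)
    (m : Fin n → ℝ)
    (hm : ∀ i, m i = (∑ j ∈ G.neighborFinset i, (G.degree j : ℝ)) / (G.degree i : ℝ))
    (hord : ∀ i j : Fin n, i ≤ j → m j ≤ m i)
    (N : ℝ) (hN : IsGreatest {x | ∃ i j, G.Adj i j ∧ x = (G.degree j : ℝ) / (G.degree i : ℝ)} N) :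
    ∀ i : Fin n,
      specRad (G.adjMatrix ℝ) ≤
        (m i - N +
          Real.sqrt ((m i + N) ^ 2 + 4 * N * ∑ k ∈ Finset.Iio i, (m k - m i))) / 2 ∧
      (specRad (G.adjMatrix ℝ) =
        (m i - N +
          Real.sqrt ((m i + N) ^ 2 + 4 * N * ∑ k ∈ Finset.Iio i, (m k - m i))) / 2 ↔
        ∀ j k : Fin n, m j = m k) :=
  stmt_9_general G hconn m hm hord N hN
end

section
/- Let G be a connected graph on n ≥ 2 vertices with maximum degree Δ. For real α, let (^α m)_i = (Σ_{j∼i} d_jᵅ)/d_iᵅ, assume (^α m)₁ + d₁ ≥ ... ≥ (^α m)_n + d_n, and let N = max_{i∼j} d_jᵅ/d_iᵅ. Then for each 1 ≤ i ≤ n, ρ(Q(G)) ≤ ((^α m)_i + d_i + Δ − N + √(((^α m)_i + d_i − Δ + N)² + 4N Σ_{k=1}^{i−1}((^α m)_k + d_k − (^α m)_i − d_i)))/2. -/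
/-!
`Q = D + A` is entrywise nonnegative, so `ρ(Q) ≤ λ` as soon as `Q ζ ≤ λ ζ` for some positive
vector `ζ` (compare a complex eigenvector with `ζ` at the vertex where `|v k| / ζ k` is largest).
With `p k = d_k ^ α`, `r k = m k + d k`, `w k = r k - r i` for `k < i` (and `0` otherwise) and
`c = λ - Δ + N`, take `ζ k = p k (c + w k)`. Since `Σ_{j ∼ k} p j = p k m k` and `p j ≤ N p k` along
edges, `(Q ζ)_k ≤ λ ζ_k` reduces to `(λ - r i)(λ - Δ + N) ≥ N Σ_{k < i} (r k - r i)`, whose larger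
root is the bound. When that root equals `Δ - N`, the vector `ζ` is not positive, and the bound is
obtained as the limit of the bounds `λ + ε`.
-/

open Matrix Finset Real

theorem Multiset.foldr_max_le_of_forall_le {α : Type*} [LinearOrder α] {s : Multiset α} {b x : α}
    (hb : b ≤ x) (h : ∀ a ∈ s, a ≤ x) : s.foldr max b ≤ x := by
  induction s using Multiset.induction_on with
  | empty => exact hb
  | cons a s ih =>
    rw [Multiset.foldr_cons]
    exact max_le (h a (Multiset.mem_cons_self a s))
      (ih fun c hc => h c (Multiset.mem_cons_of_mem hc))

theorem Matrix.exists_mulVec_eq_smul_of_isRoot_charpoly_s11 {ι K : Type*} [Fintype ι] [DecidableEq ι]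
    [Field K] {A : Matrix ι ι K} {μ : K} (h : A.charpoly.IsRoot μ) :
    ∃ v ≠ 0, A *ᵥ v = μ • v := by
  obtain ⟨v, hv0, hv⟩ := exists_mulVec_eq_zero_iff.mpr ((eval_charpoly A μ).symm.trans h)
  refine ⟨v, hv0, ?_⟩
  rw [sub_mulVec, sub_eq_zero] at hv
  rw [← hv]
  ext j
  simp [mulVec_diagonal]

theorem Matrix.norm_eigenvalue_le_of_mulVec_le {ι : Type*} [Fintype ι] {A : Matrix ι ι ℝ}
    (hA : ∀ i j, 0 ≤ A i j) {z : ι → ℝ} (hz : ∀ i, 0 < z i) {r : ℝ}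
    (hAz : ∀ i, (A *ᵥ z) i ≤ r * z i) {μ : ℂ} {v : ι → ℂ} (hv : v ≠ 0)
    (hAv : A.map (↑) *ᵥ v = μ • v) : ‖μ‖ ≤ r := by
  obtain ⟨j₀, hj₀⟩ := Function.ne_iff.mp hv
  have : Nonempty ι := ⟨j₀⟩
  obtain ⟨k, hk⟩ := Finite.exists_max fun j => ‖v j‖ / z j
  have hvz : ∀ j, ‖v j‖ ≤ ‖v k‖ / z k * z j := fun j =>
    (div_le_iff₀ (hz j)).mp (hk j)
  have hvk : 0 < ‖v k‖ := by
    have := (div_pos (norm_pos_iff.mpr hj₀) (hz j₀)).trans_le (hk j₀)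
    exact (div_pos_iff_of_pos_right (hz k)).mp this
  refine le_of_mul_le_mul_right ?_ hvk
  calc ‖μ‖ * ‖v k‖ = ‖∑ j, (A k j : ℂ) * v j‖ := by
        rw [← norm_mul, ← smul_eq_mul, ← Pi.smul_apply, ← hAv]; rfl
    _ ≤ ∑ j, A k j * ‖v j‖ := by
        refine (norm_sum_le _ _).trans_eq (Finset.sum_congr rfl fun j _ => ?_)
        rw [norm_mul, Complex.norm_real, Real.norm_of_nonneg (hA k j)]
    _ ≤ ∑ j, A k j * (‖v k‖ / z k * z j) :=
        Finset.sum_le_sum fun j _ => mul_le_mul_of_nonneg_left (hvz j) (hA k j)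
    _ = ‖v k‖ / z k * (A *ᵥ z) k := by
        rw [mulVec, dotProduct, Finset.mul_sum]
        exact Finset.sum_congr rfl fun j _ => by ring
    _ ≤ ‖v k‖ / z k * (r * z k) :=
        mul_le_mul_of_nonneg_left (hAz k) (div_nonneg (norm_nonneg _) (hz k).le)
    _ = r * ‖v k‖ := by field_simp [(hz k).ne']

theorem specRad_le_of_mulVec_le_s11 {n : ℕ} {A : Matrix (Fin n) (Fin n) ℝ}
    (hA : ∀ i j, 0 ≤ A i j) {z : Fin n → ℝ} (hz : ∀ i, 0 < z i) {r : ℝ} (hr : 0 ≤ r)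
    (hAz : ∀ i, (A *ᵥ z) i ≤ r * z i) : specRad A ≤ r := by
  refine Multiset.foldr_max_le_of_forall_le hr fun a ha => ?_
  obtain ⟨μ, hμ, rfl⟩ := Multiset.mem_map.mp ha
  obtain ⟨v, hv, hAv⟩ := exists_mulVec_eq_smul_of_isRoot_charpoly_s11
    ((Polynomial.mem_roots (charpoly_monic _).ne_zero).mp hμ)
  exact norm_eigenvalue_le_of_mulVec_le hA hz hAz hv hAv

namespace SimpleGraph

variable {V : Type*} [Fintype V] (G : SimpleGraph V) [DecidableRel G.Adj]

theorem sum_neighborFinset_le_sum_sub [DecidableEq V] {w : V → ℝ} (hw : ∀ j, 0 ≤ w j) (k : V) :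
    ∑ j ∈ G.neighborFinset k, w j ≤ ∑ j, w j - w k := by
  rw [← Finset.sum_erase_eq_sub (Finset.mem_univ k)]
  refine Finset.sum_le_sum_of_subset_of_nonneg (fun j hj => ?_) fun j _ _ => hw j
  exact Finset.mem_erase.mpr ⟨(G.ne_of_adj ((G.mem_neighborFinset k j).mp hj)).symm, mem_univ j⟩

theorem sum_neighborFinset_mul_add_le [DecidableEq V] {p m w : V → ℝ} {N : ℝ} (c : ℝ)
    (hp : ∀ k, 0 ≤ p k) (hpm : ∀ k, p k * m k = ∑ j ∈ G.neighborFinset k, p j)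
    (hN : ∀ k j, G.Adj k j → p j ≤ N * p k) (hN0 : 0 ≤ N) (hw : ∀ j, 0 ≤ w j) (k : V) :
    ∑ j ∈ G.neighborFinset k, p j * (c + w j) ≤ p k * (c * m k + N * (∑ j, w j - w k)) := by
  have hpw : ∑ j ∈ G.neighborFinset k, p j * w j ≤ N * p k * ∑ j ∈ G.neighborFinset k, w j := by
    rw [Finset.mul_sum]
    exact Finset.sum_le_sum fun j hj =>
      mul_le_mul_of_nonneg_right (hN k j ((G.mem_neighborFinset k j).mp hj)) (hw j)
  have hw' := mul_le_mul_of_nonneg_left (G.sum_neighborFinset_le_sum_sub hw k)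
    (mul_nonneg hN0 (hp k))
  calc ∑ j ∈ G.neighborFinset k, p j * (c + w j)
      = c * (p k * m k) + ∑ j ∈ G.neighborFinset k, p j * w j := by
        rw [hpm, Finset.mul_sum, ← Finset.sum_add_distrib]
        exact Finset.sum_congr rfl fun j _ => by ring
    _ ≤ p k * (c * m k + N * (∑ j, w j - w k)) := by linarith

end SimpleGraph

section SignlessLaplacianBound

open SimpleGraph

variable {n : ℕ} (G : SimpleGraph (Fin n)) [DecidableRel G.Adj]

theorem diagonal_add_adjMatrix_mulVec_apply (d ζ : Fin n → ℝ) (k : Fin n) :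
    ((diagonal d + G.adjMatrix ℝ) *ᵥ ζ) k = d k * ζ k + ∑ j ∈ G.neighborFinset k, ζ j := by
  rw [add_mulVec, Pi.add_apply, mulVec_diagonal, adjMatrix_mulVec_apply]

theorem specRad_diagonal_add_adjMatrix_le_of_lt {d p m : Fin n → ℝ} {Δ N lam : ℝ} (i : Fin n)
    (hd : ∀ k, 0 ≤ d k) (hdΔ : ∀ k, d k ≤ Δ) (hp : ∀ k, 0 < p k)
    (hpm : ∀ k, p k * m k = ∑ j ∈ G.neighborFinset k, p j)
    (hN : ∀ k j, G.Adj k j → p j ≤ N * p k) (hN0 : 0 ≤ N)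
    (hord : ∀ k j : Fin n, k ≤ j → m j + d j ≤ m k + d k)
    (hi : m i + d i ≤ lam) (hΔN : Δ - N < lam)
    (hM : N * ∑ k ∈ Iio i, (m k + d k - m i - d i) ≤ (lam - (m i + d i)) * (lam - Δ + N)) :
    specRad (diagonal d + G.adjMatrix ℝ) ≤ lam := by
  set c := lam - Δ + N
  set w : Fin n → ℝ := fun k => if k < i then m k + d k - m i - d i else 0 with hw
  have hw0 : ∀ k, 0 ≤ w k := fun k => by
    by_cases hk : k < i
    · simp only [hw, if_pos hk]; linarith [hord k i hk.le]
    · simp only [hw, if_neg hk, le_refl]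
  have hwr : ∀ k, m k + d k - w k ≤ m i + d i := fun k => by
    by_cases hk : k < i
    · simp only [hw, if_pos hk]; linarith
    · simp only [hw, if_neg hk]; linarith [hord i k (not_lt.mp hk)]
  have hW : ∑ k ∈ Iio i, (m k + d k - m i - d i) = ∑ k, w k := by
    rw [hw, Finset.sum_ite, Finset.sum_const_zero, add_zero]
    congr 1; ext k; simp
  have hm0 : ∀ k, 0 ≤ m k := fun k => nonneg_of_mul_nonneg_right
    ((hpm k).symm ▸ Finset.sum_nonneg fun j _ => (hp j).le) (hp k)
  refine specRad_le_of_mulVec_le_s11 (z := fun k => p k * (c + w k)) (fun k j => ?_)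
    (fun k => mul_pos (hp k) (by linarith [hw0 k])) (by linarith [hm0 i, hd i]) fun k => ?_
  · rw [Matrix.add_apply, adjMatrix_apply]
    exact add_nonneg (by by_cases h : k = j <;> simp [h, hd]) (by split_ifs <;> norm_num)
  rw [diagonal_add_adjMatrix_mulVec_apply]
  have hnb := G.sum_neighborFinset_mul_add_le c (fun k => (hp k).le) hpm hN hN0 hw0 k
  have hscalar : d k * (c + w k) + (c * m k + N * (∑ j, w j - w k)) ≤ lam * (c + w k) := by
    -- with `r = m + d`, the right side minus the left side is
    -- `(c (λ - r i) - N Σ w) + c (r i - r k + w k) + w k (Δ - d k)`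
    rw [← hW]
    nlinarith [mul_nonneg (hw0 k) (sub_nonneg.mpr (hdΔ k)),
      mul_nonneg (sub_pos.mpr hΔN).le (sub_nonneg.mpr (hwr k))]
  calc d k * (p k * (c + w k)) + ∑ j ∈ G.neighborFinset k, p j * (c + w j)
      ≤ p k * (d k * (c + w k) + (c * m k + N * (∑ j, w j - w k))) := by nlinarith [hnb]
    _ ≤ p k * (lam * (c + w k)) := mul_le_mul_of_nonneg_left hscalar (hp k).le
    _ = lam * (p k * (c + w k)) := by ring

theorem specRad_diagonal_add_adjMatrix_le {d p m : Fin n → ℝ} {Δ N : ℝ} (i : Fin n)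
    (hd : ∀ k, 0 ≤ d k) (hdΔ : ∀ k, d k ≤ Δ) (hp : ∀ k, 0 < p k)
    (hpm : ∀ k, p k * m k = ∑ j ∈ G.neighborFinset k, p j)
    (hN : ∀ k j, G.Adj k j → p j ≤ N * p k) (hN0 : 0 ≤ N)
    (hord : ∀ k j : Fin n, k ≤ j → m j + d j ≤ m k + d k) :
    specRad (diagonal d + G.adjMatrix ℝ) ≤
      (m i + d i + Δ - N + √((m i + d i - Δ + N) ^ 2 +
        4 * N * ∑ k ∈ Iio i, (m k + d k - m i - d i))) / 2 := by
  set M := ∑ k ∈ Iio i, (m k + d k - m i - d i)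
  have hM : 0 ≤ M := Finset.sum_nonneg fun k hk => by
    linarith [hord k i (Finset.mem_Iio.mp hk).le]
  set s := √((m i + d i - Δ + N) ^ 2 + 4 * N * M)
  have hs : s ^ 2 = (m i + d i - Δ + N) ^ 2 + 4 * N * M := Real.sq_sqrt (by positivity)
  -- the bound is the larger root of `(x - (m i + d i)) * (x - Δ + N) = N * M`
  set x := (m i + d i + Δ - N + s) / 2 with hx
  have hs_abs : |m i + d i - Δ + N| ≤ s :=
    Real.abs_le_sqrt (le_add_of_nonneg_right (by positivity))
  obtain ⟨hsl, hsr⟩ := abs_le.mp hs_abs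
  have hxi : m i + d i ≤ x := by linarith
  have hxΔ : Δ - N ≤ x := by linarith
  have hroot : (x - (m i + d i)) * (x - Δ + N) = N * M := by linear_combination hs / 4
  refine le_of_forall_pos_le_add fun ε hε =>
    specRad_diagonal_add_adjMatrix_le_of_lt G i hd hdΔ hp hpm hN hN0 hord (by linarith)
      (by linarith) ?_
  rw [← hroot]
  gcongr <;> linarith

end SignlessLaplacianBound

theorem stmt_11_general {n : ℕ} (G : SimpleGraph (Fin n)) [DecidableRel G.Adj]
    (hconn : G.Connected) (α : ℝ)
    (Δ : ℝ) (hΔ : IsGreatest {x | ∃ i, x = (G.degree i : ℝ)} Δ)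
    (m : Fin n → ℝ)
    (hm : ∀ i, m i = (∑ j ∈ G.neighborFinset i, (G.degree j : ℝ) ^ α) / (G.degree i : ℝ) ^ α)
    (hord : ∀ i j : Fin n, i ≤ j → m j + (G.degree j : ℝ) ≤ m i + (G.degree i : ℝ))
    (N : ℝ) (hN : IsGreatest {x | ∃ i j, G.Adj i j ∧ x = (G.degree j : ℝ) ^ α / (G.degree i : ℝ) ^ α} N) :
    ∀ i : Fin n,
      specRad (Matrix.diagonal (fun i => (G.degree i : ℝ)) + G.adjMatrix ℝ) ≤
        (m i + (G.degree i : ℝ) + Δ - N +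
          Real.sqrt ((m i + (G.degree i : ℝ) - Δ + N) ^ 2 +
            4 * N * ∑ k ∈ Finset.Iio i,
              (m k + (G.degree k : ℝ) - m i - (G.degree i : ℝ)))) / 2 := by
  obtain ⟨a, b, hab, hNab⟩ := hN.1
  have : Nontrivial (Fin n) := ⟨a, b, hab.ne⟩
  have hp : ∀ k, 0 < (G.degree k : ℝ) ^ α := fun k =>
    Real.rpow_pos_of_pos (Nat.cast_pos.mpr (hconn.preconnected.degree_pos_of_nontrivial k)) α
  have hN0 : 0 ≤ N := hNab ▸ div_nonneg (hp b).le (hp a).le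
  refine fun i => specRad_diagonal_add_adjMatrix_le G i (fun k => Nat.cast_nonneg _)
    (fun k => hΔ.2 ⟨k, rfl⟩) hp (fun k => ?_) (fun k j hkj => ?_) hN0 hord
  · rw [hm k, mul_div_cancel₀ _ (hp k).ne']
  · exact (div_le_iff₀ (hp k)).mp (hN.2 ⟨k, j, hkj, rfl⟩)

theorem stmt_11 {n : ℕ} (hn : 2 ≤ n) (G : SimpleGraph (Fin n)) [DecidableRel G.Adj]
    (hconn : G.Connected) (α : ℝ)
    (Δ : ℝ) (hΔ : IsGreatest {x | ∃ i, x = (G.degree i : ℝ)} Δ)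
    (m : Fin n → ℝ)
    (hm : ∀ i, m i = (∑ j ∈ G.neighborFinset i, (G.degree j : ℝ) ^ α) / (G.degree i : ℝ) ^ α)
    (hord : ∀ i j : Fin n, i ≤ j → m j + (G.degree j : ℝ) ≤ m i + (G.degree i : ℝ))
    (N : ℝ) (hN : IsGreatest {x | ∃ i j, G.Adj i j ∧ x = (G.degree j : ℝ) ^ α / (G.degree i : ℝ) ^ α} N) :
    ∀ i : Fin n,
      specRad (Matrix.diagonal (fun i => (G.degree i : ℝ)) + G.adjMatrix ℝ) ≤
        (m i + (G.degree i : ℝ) + Δ - N +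
          Real.sqrt ((m i + (G.degree i : ℝ) - Δ + N) ^ 2 +
            4 * N * ∑ k ∈ Finset.Iio i,
              (m k + (G.degree k : ℝ) - m i - (G.degree i : ℝ)))) / 2 :=
  stmt_11_general G hconn α Δ hΔ m hm hord N hN
end
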